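/- Let Q be a restriction quantal frame, let A be a completely prime filter in Q containing a projection, let a be a partial isometry with a* ∈ A. Then B = (aA)↑ is a completely prime filter in Q with d(B) = A, where d(B) = (B*)↑. -/
import Mathlib


/-- A restriction quantal frame: a frame `Q` with a monoid multiplication
distributing over arbitrary joins (a unital quantal frame), which is an
Ehresmann semigroup whose projections are exactly the elements below the
monoid unit `1` and whose unary operations `st` (`*`) and `pl` (`⁺`) preserve
joins, such that the top element is a join of partial isometries and the
partial isometries are closed under multiplication. -/
class RQF (Q : Type*) extends Order.Frame Q, Monoid Q where
  mul_sSup_distrib : ∀ (a : Q) (S : Set Q), a * sSup S = ⨆ b ∈ S, a * b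
  sSup_mul_distrib : ∀ (a : Q) (S : Set Q), sSup S * a = ⨆ b ∈ S, b * a
  st : Q → Q
  pl : Q → Q
  st_le_one : ∀ a : Q, st a ≤ 1
  pl_le_one : ∀ a : Q, pl a ≤ 1
  proj_comm : ∀ a b : Q, a ≤ 1 → b ≤ 1 → a * b = b * a
  proj_idem : ∀ a : Q, a ≤ 1 → a * a = a
  st_proj : ∀ a : Q, a ≤ 1 → st a = a
  pl_proj : ∀ a : Q, a ≤ 1 → pl a = a
  mul_st : ∀ a : Q, a * st a = a
  pl_mul : ∀ a : Q, pl a * a = a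
  st_mul_eq : ∀ a b : Q, st (a * b) = st (st a * b)
  pl_mul_eq : ∀ a b : Q, pl (a * b) = pl (a * pl b)
  st_sSup : ∀ S : Set Q, st (sSup S) = ⨆ a ∈ S, st a
  pl_sSup : ∀ S : Set Q, pl (sSup S) = ⨆ a ∈ S, pl a
  top_join_pi : sSup {a : Q | ∀ b, b ≤ a → b = pl b * a ∧ b = a * st b} = ⊤
  pi_mul_closed : ∀ a b : Q,
    (∀ c, c ≤ a → c = pl c * a ∧ c = a * st c) →
    (∀ c, c ≤ b → c = pl c * b ∧ c = b * st c) →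
    (∀ c, c ≤ a * b → c = pl c * (a * b) ∧ c = (a * b) * st c)

namespace RQF

variable {Q : Type*} [RQF Q]

/-- `a` is a partial isometry. -/
def PI (a : Q) : Prop := ∀ b, b ≤ a → b = pl b * a ∧ b = a * st b

/-- `a` and `b` are compatible. -/
def Compat (a b : Q) : Prop := a * st b = b * st a ∧ pl b * a = pl a * b

/-- A completely prime filter in `Q`: a proper filter such that whenever a
join lies in it, one of the joinands does. -/
def CPFilter (A : Set Q) : Prop :=
  A.Nonempty ∧
  (∀ a ∈ A, ∀ b : Q, a ≤ b → b ∈ A) ∧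
  (∀ a ∈ A, ∀ b ∈ A, a ⊓ b ∈ A) ∧
  (⊥ : Q) ∉ A ∧
  ∀ S : Set Q, sSup S ∈ A → ∃ s ∈ S, s ∈ A

/-- A completely prime filter in the frame `e↓ = 1↓` of projections. -/
def CPFilterProj (F : Set Q) : Prop :=
  F.Nonempty ∧
  (∀ f ∈ F, f ≤ (1 : Q)) ∧
  (∀ f ∈ F, ∀ g : Q, g ≤ (1 : Q) → f ≤ g → g ∈ F) ∧
  (∀ f ∈ F, ∀ g ∈ F, f ⊓ g ∈ F) ∧
  (⊥ : Q) ∉ F ∧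
  ∀ S : Set Q, (∀ s ∈ S, s ≤ (1 : Q)) → sSup S ∈ F → ∃ s ∈ S, s ∈ F

/-- Upward closure in `Q`. -/
def up (F : Set Q) : Set Q := {x | ∃ f ∈ F, f ≤ x}

/-- `d(A) = (A*)↑`. -/
def dF (A : Set Q) : Set Q := {x | ∃ a ∈ A, st a ≤ x}

/-- `r(A) = (A⁺)↑`. -/
def rF (A : Set Q) : Set Q := {x | ∃ a ∈ A, pl a ≤ x}

/-- `A · B = (AB)↑`. -/
def prodF (A B : Set Q) : Set Q := {x | ∃ a ∈ A, ∃ b ∈ B, a * b ≤ x}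

end RQF

namespace RQF

variable {Q : Type*} [RQF Q]

lemma mul_le_mul_left'' {b c : Q} (h : b ≤ c) (a : Q) : a * b ≤ a * c := by
  have hd := mul_sSup_distrib a ({b, c} : Set Q)
  rw [sSup_pair, sup_eq_right.mpr h] at hd
  rw [hd]
  exact le_biSup (fun x => a * x) (Set.mem_insert b {c})

lemma mul_le_mul_right'' {b c : Q} (h : b ≤ c) (a : Q) : b * a ≤ c * a := by
  have hd := sSup_mul_distrib a ({b, c} : Set Q)
  rw [sSup_pair, sup_eq_right.mpr h] at hd
  rw [hd]
  exact le_biSup (fun x => x * a) (Set.mem_insert b {c})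

lemma mul_le_mul'' {b c b' c' : Q} (h : b ≤ c) (h' : b' ≤ c') : b * b' ≤ c * c' :=
  le_trans (mul_le_mul_left'' h' b) (mul_le_mul_right'' h c')

lemma st_mono {b c : Q} (h : b ≤ c) : st b ≤ st c := by
  have hd := st_sSup ({b, c} : Set Q)
  rw [sSup_pair, sup_eq_right.mpr h] at hd
  rw [hd]
  exact le_biSup (fun x => st x) (Set.mem_insert b {c})

lemma st_bot : st (⊥ : Q) = ⊥ := by
  have := st_sSup (∅ : Set Q)
  simpa using this

lemma proj_mul_inf {e f : Q} (he : e ≤ 1) (hf : f ≤ 1) : e * f = e ⊓ f := by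
  apply le_antisymm
  · refine le_inf ?_ ?_
    · calc e * f ≤ e * 1 := mul_le_mul_left'' hf e
        _ = e := mul_one e
    · calc e * f ≤ 1 * f := mul_le_mul_right'' he f
        _ = f := one_mul f
  · calc e ⊓ f = (e ⊓ f) * (e ⊓ f) := (proj_idem _ (le_trans inf_le_left he)).symm
      _ ≤ e * f := mul_le_mul'' inf_le_left inf_le_right

lemma st_mul_proj (a : Q) {e : Q} (he : e ≤ 1) : st (a * e) = st a * e := by
  rw [st_mul_eq]
  exact st_proj _ (by
    calc st a * e ≤ 1 * 1 := mul_le_mul'' (st_le_one a) he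
      _ = 1 := one_mul 1)

end RQF

open RQF in
/-- if `A` is an identity completely prime filter, `a` a partial
isometry with `a* ∈ A`, then `B = (aA)↑` is a completely prime filter with
`d(B) = A`. -/
theorem up_mul_cpfilter_with_domain {Q : Type*} [RQF Q]
    (A : Set Q) (hA : CPFilter A) (hproj : ∃ f ∈ A, f ≤ (1 : Q))
    (a : Q) (hpi : PI a) (hst : st a ∈ A) :
    CPFilter {x : Q | ∃ c ∈ A, a * c ≤ x} ∧
    dF {x : Q | ∃ c ∈ A, a * c ≤ x} = A := by
  obtain ⟨hAne, hAup, hAinf, hAbot, hAprime⟩ := hA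
  obtain ⟨f, hfA, hf1⟩ := hproj
  set B : Set Q := {x : Q | ∃ c ∈ A, a * c ≤ x} with hB
  -- any element of B is above a * e for a projection e ∈ A
  have key : ∀ x ∈ B, ∃ e ∈ A, e ≤ (1 : Q) ∧ a * e ≤ x := by
    rintro x ⟨c, hcA, hcx⟩
    refine ⟨c ⊓ f, hAinf c hcA f hfA, le_trans inf_le_right hf1, ?_⟩
    exact le_trans (mul_le_mul_left'' inf_le_left a) hcx
  -- st (a * e) = st a ⊓ e ∈ A for projections e ∈ A
  have stae : ∀ e : Q, e ≤ (1 : Q) → st (a * e) = st a ⊓ e := by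
    intro e he
    rw [st_mul_proj a he, proj_mul_inf (st_le_one a) he]
  refine ⟨⟨⟨a, st a, hst, le_of_eq (mul_st a)⟩, ?_, ?_, ?_, ?_⟩, ?_⟩
  · rintro x ⟨c, hcA, hcx⟩ y hxy
    exact ⟨c, hcA, le_trans hcx hxy⟩
  · rintro x ⟨c, hcA, hcx⟩ y ⟨c', hc'A, hc'y⟩
    refine ⟨c ⊓ c', hAinf c hcA c' hc'A, le_inf ?_ ?_⟩
    · exact le_trans (mul_le_mul_left'' inf_le_left a) hcx
    · exact le_trans (mul_le_mul_left'' inf_le_right a) hc'y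
  · intro hbot
    obtain ⟨e, heA, he1, hle⟩ := key ⊥ hbot
    have hae : a * e = ⊥ := le_bot_iff.mp hle
    have : st a ⊓ e = (⊥ : Q) := by
      rw [← stae e he1, hae, st_bot]
    exact hAbot (this ▸ hAinf _ hst _ heA)
  · intro S hS
    obtain ⟨e, heA, he1, hle⟩ := key (sSup S) hS
    -- a * e = sSup of the pieces s ⊓ (a*e)
    have hsplit : a * e = sSup ((fun s => s ⊓ (a * e)) '' S) := by
      rw [sSup_image]
      calc a * e = sSup S ⊓ (a * e) := (inf_eq_right.mpr hle).symm
        _ = ⨆ s ∈ S, s ⊓ (a * e) := sSup_inf_eq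
    have hstA : sSup (RQF.st '' ((fun s => s ⊓ (a * e)) '' S)) ∈ A := by
      have h1 : st (a * e) = sSup (RQF.st '' ((fun s => s ⊓ (a * e)) '' S)) := by
        conv_lhs => rw [hsplit]
        rw [st_sSup, sSup_image]
      rw [← h1, stae e he1]
      exact hAinf _ hst _ heA
    obtain ⟨y, hy, hyA⟩ := hAprime _ hstA
    obtain ⟨t, ht, rfl⟩ := hy
    obtain ⟨s, hsS, rfl⟩ := ht
    refine ⟨s, hsS, st (s ⊓ (a * e)), hyA, ?_⟩
    have hba : s ⊓ (a * e) ≤ a := by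
      calc s ⊓ (a * e) ≤ a * e := inf_le_right
        _ ≤ a * 1 := mul_le_mul_left'' he1 a
        _ = a := mul_one a
    calc a * st (s ⊓ (a * e)) = s ⊓ (a * e) := (hpi _ hba).2.symm
      _ ≤ s := inf_le_left
  · ext x
    constructor
    · rintro ⟨b, hbB, hstb⟩
      obtain ⟨e, heA, he1, hle⟩ := key b hbB
      have h1 : st a ⊓ e ≤ x := by
        rw [← stae e he1]
        exact le_trans (st_mono hle) hstb
      exact hAup _ (hAinf _ hst _ heA) x h1
    · intro hx
      set e := x ⊓ f with he
      have heA : e ∈ A := hAinf x hx f hfA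
      have he1 : e ≤ (1 : Q) := le_trans inf_le_right hf1
      refine ⟨a * e, ⟨e, heA, le_rfl⟩, ?_⟩
      rw [stae e he1]
      exact le_trans inf_le_right inf_le_left
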